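/- arXiv:1310.0896 — 2 statements merged into one kernel-verified Lean document; each statement's English description precedes it below -/
import Mathlib

section
/- Let X be a compact complex manifold of dimension 2n, L a nef line bundle on X, and suppose there is a constant c > 0 and a quadratic form q on H^2(X,ℝ) such that (kL + α)^{2n} = c · q(kL + α)^n for all k ∈ ℕ and a fixed Kähler class α, with q(L) = 0. Then L^{2n} = 0 and the numerical Kodaira dimension of L is at most n; if moreover q(L, α) > 0, comparing coefficients of k^n shows L^n · α^n ≠ 0, so the numerical Kodaira dimension of L equals exactly n. -/
open Polynomial


/-- Fujiki-relation degree comparison. Let `X` be compact complex of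
dimension `2n`, `L` nef, and suppose `(kL + α)^{2n} = c · q(kL + α)^n` for a constant
`c > 0`, a quadratic form `q` with `q(L) = 0`, and a fixed Kähler class `α`.
Writing `I i = L^i · α^{2n-i}` for the intersection numbers, so that
`(kL + α)^{2n} = Σ_i C(2n,i) I i k^i`, and `q(kL + α) = 2 q(L,α) k + q(α)`
(using `q(L) = 0`, with `b = q(L,α)`), then comparing degrees in `k`:
`L^{2n} = I (2n) = 0` and `I i = 0` for all `i > n` (so the numerical Kodaira
dimension of `L` is at most `n`); and if moreover `b = q(L,α) > 0`, comparing the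
coefficients of `k^n` shows `L^n · α^n = I n ≠ 0`, so the numerical Kodaira dimension
of `L` equals exactly `n`. -/
theorem stmt2 (n : ℕ) (hn : 1 ≤ n) (c : ℝ) (hc : 0 < c)
    (b qα : ℝ)           -- `b = q(L, α)`, `qα = q(α)`
    (I : ℕ → ℝ)          -- `I i = L^i · α^{2n - i}`
    (hFujiki : ∀ k : ℝ,
      ∑ i ∈ Finset.range (2 * n + 1), (Nat.choose (2 * n) i : ℝ) * I i * k ^ i
        = c * (2 * b * k + qα) ^ n) :
    I (2 * n) = 0 ∧ (∀ i, n < i → i ≤ 2 * n → I i = 0) ∧ (0 < b → I n ≠ 0) := by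
  set P : ℝ[X] := ∑ i ∈ Finset.range (2 * n + 1),
      C ((Nat.choose (2 * n) i : ℝ) * I i) * X ^ i with hP
  set R : ℝ[X] := C (2 * b) * X + C qα with hR
  set Q : ℝ[X] := C c * R ^ n with hQ
  have hPQ : P = Q := by
    apply Polynomial.funext
    intro k
    simp only [hP, hQ, hR, eval_finset_sum, eval_mul, eval_add, eval_pow, eval_C, eval_X]
    exact hFujiki k
  have hPcoeff : ∀ i, i ≤ 2 * n → P.coeff i = (Nat.choose (2 * n) i : ℝ) * I i := by
    intro i hi
    rw [hP, Polynomial.finset_sum_coeff]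
    rw [Finset.sum_eq_single i]
    · rw [coeff_C_mul, coeff_X_pow, if_pos rfl, mul_one]
    · intro j _ hj
      rw [coeff_C_mul, coeff_X_pow, if_neg (Ne.symm hj), mul_zero]
    · intro h
      exact absurd (Finset.mem_range.2 (Nat.lt_succ_of_le hi)) h
  have hQdeg : Q.natDegree ≤ n := by
    calc Q.natDegree ≤ (C c).natDegree + (R ^ n).natDegree := natDegree_mul_le
      _ ≤ 0 + n * R.natDegree := by
          gcongr
          · exact le_of_eq (natDegree_C c)
          · exact natDegree_pow_le
      _ ≤ 0 + n * 1 := by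
          gcongr
          exact natDegree_add_le_of_degree_le (natDegree_C_mul_le _ _ |>.trans (by simp))
            ((natDegree_C qα).le.trans (by norm_num))
      _ = n := by ring
  have hzero : ∀ i, n < i → i ≤ 2 * n → I i = 0 := by
    intro i hni hi
    have h1 : P.coeff i = 0 := by
      rw [hPQ]
      exact coeff_eq_zero_of_natDegree_lt (lt_of_le_of_lt hQdeg hni)
    rw [hPcoeff i hi] at h1
    have hch : (Nat.choose (2 * n) i : ℝ) ≠ 0 := by
      exact_mod_cast (Nat.choose_pos hi).ne'
    exact (mul_eq_zero.1 h1).resolve_left hch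
  refine ⟨hzero (2 * n) (by omega) le_rfl, hzero, ?_⟩
  intro hb hIn
  have hcn : P.coeff n = 0 := by
    rw [hPcoeff n (by omega), hIn, mul_zero]
  have hRdeg : R.natDegree = 1 := by
    rw [hR]
    have : (2 : ℝ) * b ≠ 0 := by positivity
    compute_degree!
    exact hb.ne'
  have hRlead : R.leadingCoeff = 2 * b := by
    rw [leadingCoeff, hRdeg]
    simp [hR, coeff_C]
  have hQn : Q.coeff n = c * (2 * b) ^ n := by
    rw [hQ, coeff_C_mul]
    have : (R ^ n).coeff n = (R ^ n).leadingCoeff := by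
      rw [leadingCoeff, natDegree_pow, hRdeg, mul_one]
    rw [this, leadingCoeff_pow, hRlead]
  rw [hPQ, hQn] at hcn
  have : c * (2 * b) ^ n ≠ 0 := by positivity
  exact this hcn
end

section
/- Let X be a non-projective irreducible symplectic manifold and L a line bundle on X with q_X(L) = 0, where q_X is the Beauville-Bogomolov form. Then L is nef. -/
/-- Lemma 3.3: Let `X` be a non-projective irreducible symplectic
manifold and `L` a line bundle with `q_X(L) = 0`. Then `L` is nef.

Formalization: `H2` models `H^2(X,ℝ)` with the Beauville-Bogomolov form `q`; `Pic` is
the subgroup of classes of line bundles; `Nef` and `Kahler` are the nef classes and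
Kähler classes. Inputs: Huybrechts' description of the nef cone (`hHuyNef`: if a line
bundle `D` is not nef there is a line bundle `M` with `q(M, D) < 0` and `q(M, α) ≥ 0`
for all Kähler `α`), and Huybrechts' projectivity criterion (`hProjCrit`: existence of
a line bundle of positive square implies `X` projective). Here `q(·,·)` is half the
polar form of `q`. -/
theorem stmt10 {H2 : Type*} [AddCommGroup H2] [Module ℝ H2]
    (q : QuadraticForm ℝ H2)
    (Pic : AddSubgroup H2) (Nef : H2 → Prop) (Kahler : Set H2)
    (Projective : Prop)
    (hnotproj : ¬ Projective)
    (L : H2) (hLPic : L ∈ Pic) (hqL : q L = 0)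
    (hHuyNef : ∀ D ∈ Pic, ¬ Nef D →
      ∃ M ∈ Pic, QuadraticMap.polar q M D / 2 < 0 ∧
        ∀ α ∈ Kahler, 0 ≤ QuadraticMap.polar q M α / 2)
    (hProjCrit : (∃ D ∈ Pic, 0 < q D) → Projective) :
    Nef L := by
  by_contra h
  obtain ⟨M, hM, hlt, -⟩ := hHuyNef L hLPic h
  set p := QuadraticMap.polar q M L with hp
  have hpneg : p < 0 := by linarith
  obtain ⟨n, hn⟩ := exists_nat_gt ((-q M) / (-p))
  have hD : M - (n : ℝ) • L ∈ Pic := by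
    have : M - (n : ℕ) • L ∈ Pic := AddSubgroup.sub_mem _ hM (AddSubgroup.nsmul_mem _ hLPic n)
    simpa [Nat.cast_smul_eq_nsmul] using this
  apply hnotproj
  apply hProjCrit
  refine ⟨M - (n : ℝ) • L, hD, ?_⟩
  have e : QuadraticMap.polar (⇑q) M (-((n : ℝ) • L)) =
      q (M + -((n : ℝ) • L)) - q M - q (-((n : ℝ) • L)) := rfl
  have hpolar : QuadraticMap.polar (⇑q) M (-((n : ℝ) • L)) = -(n * p) := by
    rw [QuadraticMap.polar_neg_right, QuadraticMap.polar_smul_right, ← hp]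
    simp
  have hqs : q (-((n : ℝ) • L)) = 0 := by
    rw [QuadraticMap.map_neg, QuadraticMap.map_smul, hqL]; simp
  have key : q (M - (n : ℝ) • L) = q M - n * p := by
    rw [sub_eq_add_neg]
    have := e
    rw [hpolar, hqs] at this
    linarith
  rw [key]
  have h1 : (-q M) / (-p) * (-p) < n * (-p) :=
    mul_lt_mul_of_pos_right hn (by linarith)
  rw [div_mul_cancel₀] at h1
  · linarith
  · linarith
end
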